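/- Let G be the presented group on generators a, b with relators a³, b², and (ab)³ (so G is isomorphic to the alternating group A₄ of order 12), and let A = {a, a⁻¹, b}, a finite symmetric generating set of G (b is an involution). Then the three-letter word b·a·b⁻¹ is geodesic over A, and consequently the geodesic language Geo(G, A) is not piecewise excluding. -/

import Mathlib

/-- `w` is a word over the alphabet `A`: every letter of `w` lies in `A`. -/
def IsWordOver {G : Type*} (A : Finset G) (w : List G) : Prop :=
  ∀ x ∈ w, x ∈ A

/-- `A` is a finite symmetric (inverse-closed) generating set of the group `G`. -/
def IsSymmGen {G : Type*} [Group G] (A : Finset G) : Prop :=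
  Subgroup.closure (A : Set G) = ⊤ ∧ ∀ a ∈ A, a⁻¹ ∈ A

/-- `w` is a geodesic word over `A`: no word over `A` of strictly smaller length
evaluates to the same element of `G`. -/
def IsGeodesic {G : Type*} [Group G] (A : Finset G) (w : List G) : Prop :=
  IsWordOver A w ∧
    ∀ v : List G, IsWordOver A v → v.prod = w.prod → w.length ≤ v.length

/-- The geodesic language of `G` over `A`. -/
def Geo {G : Type*} [Group G] (A : Finset G) : Set (List G) :=
  {w | IsGeodesic A w}

/-- A language `L` of words over `A` is piecewise excluding if there is a finite set `F`
of words over `A` such that a word `w` over `A` lies in `L` iff no element of `F` is a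
piecewise subword (i.e. a not-necessarily-contiguous subsequence) of `w`. -/
def PiecewiseExcluding {G : Type*} (A : Finset G) (L : Set (List G)) : Prop :=
  ∃ F : Finset (List G), (∀ u ∈ F, IsWordOver A u) ∧
    ∀ w : List G, IsWordOver A w → (w ∈ L ↔ ∀ u ∈ F, ¬ List.Sublist u w)

/-- The relators of `⟨a, b ∣ a³, b², (ab)³⟩ ≅ A₄`, with `a` the image of `0` and `b`
the image of `1`. -/
def a4Rels : Set (FreeGroup (Fin 2)) :=
  {(FreeGroup.of 0) ^ 3, (FreeGroup.of 1) ^ 2,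
   (FreeGroup.of 0 * FreeGroup.of 1) ^ 3}

/-- The group `⟨a, b ∣ a³, b², (ab)³⟩ ≅ A₄` of order 12. -/
abbrev A4Pres : Type := PresentedGroup a4Rels

noncomputable instance : DecidableEq A4Pres := Classical.decEq _

/-- The generating set `A = {a, a⁻¹, b}` (`b` is an involution). -/
noncomputable def a4GenSet : Finset A4Pres :=
  {PresentedGroup.of 0, (PresentedGroup.of 0)⁻¹, PresentedGroup.of 1}

/-! A piecewise excluding language is closed under passing to subsequences of its words. In
`A₄ = ⟨a, b ∣ a³, b², (ab)³⟩` the word `b·a·b⁻¹` is geodesic, since in the permutation model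
`b a b` is not a product of at most two of `(0 1 2)^{±1}, (0 1)(2 3)`, but its subsequence `b·b`
evaluates to `1` and so is not geodesic. -/

section Words

open scoped Pointwise

variable {G : Type*}

lemma IsWordOver.sublist {A : Finset G} {u w : List G} (hw : IsWordOver A w) (huw : u.Sublist w) :
    IsWordOver A u :=
  fun x hx => hw x (huw.subset hx)

lemma PiecewiseExcluding.mem_of_sublist {A : Finset G} {L : Set (List G)}
    (hL : PiecewiseExcluding A L) {u w : List G} (hw : IsWordOver A w) (hwL : w ∈ L)
    (huw : u.Sublist w) : u ∈ L := by
  obtain ⟨F, -, hF⟩ := hL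
  exact (hF u (hw.sublist huw)).2 fun f hf hfu => (hF w hw).1 hwL f hf (hfu.trans huw)

lemma IsWordOver.prod_mem_pow [Monoid G] [DecidableEq G] {S : Finset G} (hS : 1 ∈ S) :
    ∀ {v : List G} {n : ℕ}, IsWordOver S v → v.length ≤ n → v.prod ∈ S ^ n
  | [], n, _, _ => Finset.pow_subset_pow_right hS (Nat.zero_le n) (by simp)
  | x :: v, n + 1, hv, hlen => by
    rw [List.prod_cons, pow_succ']
    exact Finset.mul_mem_mul (hv x List.mem_cons_self)
      (prod_mem_pow hS (fun y hy => hv y (List.mem_cons_of_mem x hy)) (by simpa using hlen))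

variable [Group G]

lemma not_isGeodesic_of_prod_eq_one {A : Finset G} {w : List G} (hw : w ≠ []) (h1 : w.prod = 1) :
    ¬ IsGeodesic A w := fun hgeo =>
  hw <| List.eq_nil_of_length_eq_zero <| Nat.le_zero.1 <|
    hgeo.2 [] (fun _ hx => absurd hx List.not_mem_nil) (by rw [h1, List.prod_nil])

theorem not_piecewiseExcluding_geo {A : Finset G} {u w : List G} (hw : IsGeodesic A w)
    (huw : u.Sublist w) (hu : u ≠ []) (hu1 : u.prod = 1) : ¬ PiecewiseExcluding A (Geo A) :=
  fun hL => not_isGeodesic_of_prod_eq_one hu hu1 (hL.mem_of_sublist hw.1 hw huw)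

/-- `insert 1 B ^ n` is the set of products of at most `n` elements of `B`. -/
theorem isGeodesic_of_map_prod_notMem {H : Type*} [Group H] [DecidableEq H] (φ : G →* H)
    {A : Finset G} {w : List G} (hw : IsWordOver A w)
    (h : φ w.prod ∉ insert 1 (A.image φ) ^ (w.length - 1)) : IsGeodesic A w := by
  refine ⟨hw, fun v hv hvw => ?_⟩
  by_contra! hlt
  have hv' : IsWordOver (insert 1 (A.image φ)) (v.map φ) := by
    simp only [IsWordOver, List.mem_map] at hv ⊢
    rintro _ ⟨x, hx, rfl⟩
    exact Finset.mem_insert_of_mem (Finset.mem_image_of_mem φ (hv x hx))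
  refine h ?_
  rw [← hvw, map_list_prod]
  exact hv'.prod_mem_pow (Finset.mem_insert_self 1 _) (by rw [List.length_map]; omega)

end Words

namespace A4Pres

open Equiv PresentedGroup

/-- `a ↦ (0 1 2)`, `b ↦ (0 1)(2 3)`. -/
def permGen : Fin 2 → Perm (Fin 4) := ![swap 0 1 * swap 1 2, swap 0 1 * swap 2 3]

lemma lift_permGen_eq_one : ∀ r ∈ a4Rels, FreeGroup.lift permGen r = 1 := by
  rintro r (rfl | rfl | rfl) <;> simp only [map_pow, map_mul, FreeGroup.lift_apply_of] <;> decide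

noncomputable def toPerm : A4Pres →* Perm (Fin 4) := toGroup lift_permGen_eq_one

lemma toPerm_of (i : Fin 2) : toPerm (of i) = permGen i := toGroup.of lift_permGen_eq_one

lemma of_one_mul_self : (of 1 : A4Pres) * of 1 = 1 :=
  (QuotientGroup.eq_one_iff _).2 <| Subgroup.subset_normalClosure <| by
    simp [a4Rels, pow_two]

lemma inv_of_one : (of 1 : A4Pres)⁻¹ = of 1 := inv_eq_of_mul_eq_one_right of_one_mul_self

lemma isSymmGen_a4GenSet : IsSymmGen a4GenSet := by
  refine ⟨?_, ?_⟩
  · rw [eq_top_iff, ← closure_range_of a4Rels]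
    refine Subgroup.closure_mono ?_
    rintro _ ⟨i, rfl⟩
    fin_cases i <;> simp [a4GenSet]
  · simp [a4GenSet, inv_of_one]

lemma isGeodesic_bab : IsGeodesic a4GenSet [of 1, of 0, (of 1)⁻¹] := by
  refine isGeodesic_of_map_prod_notMem toPerm (by simp [IsWordOver, a4GenSet, inv_of_one]) ?_
  simp only [a4GenSet, Finset.image_insert, Finset.image_singleton, map_inv, toPerm_of,
    List.prod_cons, List.prod_nil, mul_one, map_mul, List.length_cons, List.length_nil]
  decide

end A4Pres

open A4Pres PresentedGroup in
/-- In `⟨a, b ∣ a³, b², (ab)³⟩ ≅ A₄` with `A = {a, a⁻¹, b}`, the word `b·a·b⁻¹` is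
geodesic, so the geodesic language is not piecewise excluding. -/
theorem a4_not_piecewise_excluding :
    IsSymmGen a4GenSet ∧
    IsGeodesic a4GenSet
      [(PresentedGroup.of 1 : A4Pres), PresentedGroup.of 0, (PresentedGroup.of 1)⁻¹] ∧
    ¬ PiecewiseExcluding a4GenSet (Geo a4GenSet) := by
  refine ⟨isSymmGen_a4GenSet, isGeodesic_bab, ?_⟩
  have hbb : List.Sublist [(of 1 : A4Pres), of 1] [of 1, of 0, (of 1)⁻¹] := by
    rw [inv_of_one]
    exact ((List.Sublist.refl _).cons _).cons_cons _
  exact not_piecewiseExcluding_geo isGeodesic_bab hbb (List.cons_ne_nil _ _)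
    (by rw [List.prod_cons, List.prod_cons, List.prod_nil, mul_one, of_one_mul_self])
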